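/- Suppose for each plane Q of the arrangement, the number of zone face-cell pairs (f,C) with f not in Q is at most z(n-1) + c(n-1). Then (n-1)·z(n) ≤ n·z(n-1) + c·n·(n-1), where z(n) denotes the maximum zone size over arrangements of n planes. -/
import Mathlib


/-- Double counting step of the zone theorem.  Let `z n` be the maximum zone
size over arrangements of `n` planes; suppose the zone of a maximizing
arrangement consists of a finite set `Pairs` of face–cell pairs (with
`π p : Fin n` the plane containing the face of the pair `p`), so that
`(Pairs.card : ℝ) = z n`.  If for each plane `Q` the number of pairs `(f, C)`
with `f` not in `Q` is at most `z (n-1) + c·(n-1)`, then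
`(n-1)·z n ≤ n·z (n-1) + c·n·(n-1)`. -/
theorem zone_double_counting (n : ℕ) (hn : 1 ≤ n) (c : ℝ) (z : ℕ → ℝ)
    {α : Type*} (Pairs : Finset α) (π : α → Fin n)
    (hmax : (Pairs.card : ℝ) = z n)
    (hQ : ∀ Q : Fin n,
      ((Pairs.filter fun p => π p ≠ Q).card : ℝ) ≤ z (n - 1) + c * ((n : ℝ) - 1)) :
    ((n : ℝ) - 1) * z n ≤ (n : ℝ) * z (n - 1) + c * n * ((n : ℝ) - 1) := by
  have key : ∑ Q : Fin n, ((Pairs.filter fun p => π p ≠ Q).card : ℝ)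
      = ((n : ℝ) - 1) * Pairs.card := by
    have h1 : ∀ Q : Fin n, ((Pairs.filter fun p => π p ≠ Q).card : ℝ)
        = ∑ p ∈ Pairs, if π p ≠ Q then (1 : ℝ) else 0 := by
      intro Q; rw [Finset.card_filter]; push_cast; rfl
    simp only [h1]
    rw [Finset.sum_comm]
    have h2 : ∀ p ∈ Pairs, (∑ Q : Fin n, if π p ≠ Q then (1 : ℝ) else 0)
        = (n : ℝ) - 1 := by
      intro p _
      have : (∑ Q : Fin n, if π p ≠ Q then (1 : ℝ) else 0)
          = ((Finset.univ.filter fun Q : Fin n => π p ≠ Q).card : ℝ) := by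
        rw [Finset.card_filter]; push_cast; rfl
      rw [this]
      have : (Finset.univ.filter fun Q : Fin n => π p ≠ Q)
          = Finset.univ.erase (π p) := by
        ext Q; simp [ne_comm, eq_comm, Finset.mem_erase]
      rw [this, Finset.card_erase_of_mem (Finset.mem_univ _), Finset.card_univ,
        Fintype.card_fin]
      have : (1 : ℕ) ≤ n := hn
      push_cast [Nat.cast_sub this]
      ring
    rw [Finset.sum_congr rfl h2, Finset.sum_const, nsmul_eq_mul, mul_comm]
  have hsum : ∑ Q : Fin n, ((Pairs.filter fun p => π p ≠ Q).card : ℝ)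
      ≤ (n : ℝ) * (z (n - 1) + c * ((n : ℝ) - 1)) := by
    calc ∑ Q : Fin n, ((Pairs.filter fun p => π p ≠ Q).card : ℝ)
        ≤ ∑ _Q : Fin n, (z (n - 1) + c * ((n : ℝ) - 1)) :=
          Finset.sum_le_sum fun Q _ => hQ Q
      _ = (n : ℝ) * (z (n - 1) + c * ((n : ℝ) - 1)) := by
          simp [Finset.sum_const, mul_comm]; ring
  rw [key, hmax] at hsum
  linarith
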